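/- All higher-order partial derivatives of the power flow injections are determined by the injection values, the voltage magnitudes, and the first-order angle derivatives. Precisely: let (G, B) and (G', B') be two pairs of N×N real matrices with associated injection functions (P, Q) and (P', Q'), and let (δ, V) and (δ', V) be two points sharing the same magnitude vector V with V_i ≠ 0 for all i. If for all i, j one has P_i(δ,V) = P'_i(δ',V), Q_i(δ,V) = Q'_i(δ',V), ∂P_i/∂δ_j (δ,V) = ∂P'_i/∂δ_j (δ',V), and ∂Q_i/∂δ_j (δ,V) = ∂Q'_i/∂δ_j (δ',V), then for every i, every k ≥ 1, and every choice of k variables among δ_1,…,δ_N, V_1,…,V_N, the corresponding k-th order iterated partial derivative of P_i (respectively Q_i) at (δ, V) equals that of P'_i (respectively Q'_i) at (δ', V). -/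

import Mathlib

/-- Active power injection `P_i(δ, V)`. -/
noncomputable def Pinj (N : ℕ) (G B : Fin N → Fin N → ℝ) (i : Fin N) :
    (Fin N → ℝ) × (Fin N → ℝ) → ℝ :=
  fun x => x.2 i * ∑ j, x.2 j *
    (G i j * Real.cos (x.1 i - x.1 j) + B i j * Real.sin (x.1 i - x.1 j))

/-- Reactive power injection `Q_i(δ, V)`. -/
noncomputable def Qinj (N : ℕ) (G B : Fin N → Fin N → ℝ) (i : Fin N) :
    (Fin N → ℝ) × (Fin N → ℝ) → ℝ :=
  fun x => x.2 i * ∑ j, x.2 j *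
    (G i j * Real.sin (x.1 i - x.1 j) - B i j * Real.cos (x.1 i - x.1 j))

/-- Partial derivative with respect to the angle `δ_j`. -/
noncomputable def pdA (N : ℕ) (j : Fin N) (f : (Fin N → ℝ) × (Fin N → ℝ) → ℝ) :
    (Fin N → ℝ) × (Fin N → ℝ) → ℝ :=
  fun x => fderiv ℝ f x (Pi.single j 1, 0)

/-- Partial derivative with respect to the voltage magnitude `V_j`. -/
noncomputable def pdM (N : ℕ) (j : Fin N) (f : (Fin N → ℝ) × (Fin N → ℝ) → ℝ) :
    (Fin N → ℝ) × (Fin N → ℝ) → ℝ :=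
  fun x => fderiv ℝ f x (0, Pi.single j 1)

/-- The coordinate direction in `(δ, V)`-space corresponding to a variable: `Sum.inl j`
is the angle variable `δ_j` and `Sum.inr j` is the magnitude variable `V_j`. -/
noncomputable def dirVec (N : ℕ) : Fin N ⊕ Fin N → (Fin N → ℝ) × (Fin N → ℝ)
  | Sum.inl j => (Pi.single j 1, 0)
  | Sum.inr j => (0, Pi.single j 1)

/-- Iterated partial derivative with respect to the list of variables `l` (each a
choice among `δ_1, …, δ_N, V_1, …, V_N`). -/
noncomputable def iterPD (N : ℕ) (l : List (Fin N ⊕ Fin N))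
    (f : (Fin N → ℝ) × (Fin N → ℝ) → ℝ) : (Fin N → ℝ) × (Fin N → ℝ) → ℝ :=
  l.foldr (fun v g => fun x => fderiv ℝ g x (dirVec N v)) f

/-!
Write `Eᵢⱼ(δ) = (Gᵢⱼ - i Bᵢⱼ) e^{i(δᵢ - δⱼ)}`, so that `Pᵢ + i Qᵢ = Vᵢ ∑ⱼ Vⱼ Eᵢⱼ`. For `j ≠ i` the
angle derivatives `∂Pᵢ/∂δⱼ` and `∂Qᵢ/∂δⱼ` are `Vᵢ Vⱼ Im Eᵢⱼ` and `-Vᵢ Vⱼ Re Eᵢⱼ`; once the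
off-diagonal `Eᵢⱼ` are known, `Pᵢ` and `Qᵢ` determine `Eᵢᵢ`. Hence the hypotheses say exactly
that `Eᵢⱼ(δ) = E'ᵢⱼ(δ')` for all `i, j`. Since `Eᵢⱼ(η) = Eᵢⱼ(δ) e^{i((η - δ)ᵢ - (η - δ)ⱼ)}`,
this makes `(P', Q')` a translate of `(P, Q)` in the angle variables, by `δ' - δ`, and
translation commutes with all partial derivatives.
-/

open Real

/-- `Re ((g - i b) e^{iθ})`. -/
noncomputable def phasorRe (g b θ : ℝ) : ℝ := g * cos θ + b * sin θ

/-- `Im ((g - i b) e^{iθ})`. -/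
noncomputable def phasorIm (g b θ : ℝ) : ℝ := g * sin θ - b * cos θ

section Phasor

variable (g b : ℝ)

theorem hasDerivAt_phasorRe (θ : ℝ) : HasDerivAt (phasorRe g b) (-phasorIm g b θ) θ := by
  refine (((hasDerivAt_cos θ).const_mul g).add ((hasDerivAt_sin θ).const_mul b)).congr_deriv ?_
  simp only [phasorIm]
  ring

theorem hasDerivAt_phasorIm (θ : ℝ) : HasDerivAt (phasorIm g b) (phasorRe g b θ) θ := by
  refine (((hasDerivAt_sin θ).const_mul g).sub ((hasDerivAt_cos θ).const_mul b)).congr_deriv ?_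
  simp only [phasorRe]
  ring

theorem phasorRe_add (ψ φ : ℝ) :
    phasorRe g b (ψ + φ) = cos ψ * phasorRe g b φ - sin ψ * phasorIm g b φ := by
  simp only [phasorRe, phasorIm, cos_add, sin_add]
  ring

theorem phasorIm_add (ψ φ : ℝ) :
    phasorIm g b (ψ + φ) = sin ψ * phasorRe g b φ + cos ψ * phasorIm g b φ := by
  simp only [phasorRe, phasorIm, cos_add, sin_add]
  ring

variable {g b} {g' b' φ φ' : ℝ}

theorem phasorRe_add_eq (hRe : phasorRe g b φ = phasorRe g' b' φ')
    (hIm : phasorIm g b φ = phasorIm g' b' φ') (ψ : ℝ) :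
    phasorRe g' b' (ψ + φ') = phasorRe g b (ψ + φ) := by
  rw [phasorRe_add, phasorRe_add, hRe, hIm]

theorem phasorIm_add_eq (hRe : phasorRe g b φ = phasorRe g' b' φ')
    (hIm : phasorIm g b φ = phasorIm g' b' φ') (ψ : ℝ) :
    phasorIm g' b' (ψ + φ') = phasorIm g b (ψ + φ) := by
  rw [phasorIm_add, phasorIm_add, hRe, hIm]

end Phasor

theorem eq_of_mul_sum_eq_of_ne {ι : Type*} [Fintype ι] {V f g : ι → ℝ} {i : ι} (hVi : V i ≠ 0)
    (h : V i * ∑ k, V k * f k = V i * ∑ k, V k * g k) (hne : ∀ k, k ≠ i → f k = g k) :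
    f i = g i := by
  classical
  have hsum := mul_left_cancel₀ hVi h
  rw [← Finset.add_sum_erase _ _ (Finset.mem_univ i), ← Finset.add_sum_erase _ _ (Finset.mem_univ i),
    Finset.sum_congr rfl fun k hk => by rw [hne k (Finset.ne_of_mem_erase hk)]] at hsum
  exact mul_left_cancel₀ hVi (add_right_cancel hsum)

theorem iterPD_comp_add_right {N : ℕ} (l : List (Fin N ⊕ Fin N))
    (f : (Fin N → ℝ) × (Fin N → ℝ) → ℝ) (a x : (Fin N → ℝ) × (Fin N → ℝ)) :
    iterPD N l (fun y => f (y + a)) x = iterPD N l f (x + a) := by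
  induction l generalizing x with
  | nil => rfl
  | cons v l ih =>
    change fderiv ℝ (iterPD N l fun y => f (y + a)) x (dirVec N v)
      = fderiv ℝ (iterPD N l f) (x + a) (dirVec N v)
    rw [funext ih, fderiv_comp_add_right]

/-- `Pinj N G B i` and `Qinj N G B i` are, definitionally, `busInjection i` applied to
`fun k => phasorRe (G i k) (B i k)` and to `fun k => phasorIm (G i k) (B i k)`. -/
noncomputable def busInjection {N : ℕ} (i : Fin N) (e : Fin N → ℝ → ℝ) :
    (Fin N → ℝ) × (Fin N → ℝ) → ℝ :=
  fun y => y.2 i * ∑ k, y.2 k * e k (y.1 i - y.1 k)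

section BusInjection

variable {N : ℕ} {i : Fin N}

theorem fderiv_busInjection_of_ne {e e' : Fin N → ℝ → ℝ}
    (he : ∀ k θ, HasDerivAt (e k) (e' k θ) θ) {j : Fin N} (hij : i ≠ j)
    (x : (Fin N → ℝ) × (Fin N → ℝ)) :
    fderiv ℝ (busInjection i e) x (Pi.single j 1, 0) = -(x.2 i * x.2 j * e' j (x.1 i - x.1 j)) := by
  have hdiff : DifferentiableAt ℝ (busInjection i e) x := by
    have : ∀ k, Differentiable ℝ (e k) := fun k θ => (he k θ).differentiableAt
    unfold busInjection
    fun_prop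
  rw [← hdiff.lineDeriv_eq_fderiv]
  set s : Fin N → ℝ := Pi.single j 1 with hs
  have hline : HasDerivAt (fun t : ℝ => x.2 i * ∑ k, x.2 k * e k (x.1 i - x.1 k - t * s k))
      (x.2 i * ∑ k, x.2 k * (e' k (x.1 i - x.1 k - 0 * s k) * -s k)) 0 := by
    refine HasDerivAt.const_mul _ (HasDerivAt.fun_sum fun k _ => HasDerivAt.const_mul _ ?_)
    refine (he k _).comp 0 ?_
    simpa using ((hasDerivAt_id (0 : ℝ)).mul_const (s k)).const_sub (x.1 i - x.1 k)
  have hslice : (fun t : ℝ => busInjection i e (x + t • (s, 0)))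
      = fun t => x.2 i * ∑ k, x.2 k * e k (x.1 i - x.1 k - t * s k) := by
    ext t
    simp [busInjection, hs, Pi.single_apply, hij, sub_add_eq_sub_sub]
  rw [lineDeriv, hslice, hline.deriv]
  simp only [hs, Pi.single_apply, mul_ite, mul_one, mul_zero, ite_self, sub_zero, mul_neg,
    Finset.sum_neg_distrib, Finset.sum_ite_eq', Finset.mem_univ, ↓reduceIte, neg_inj]
  ring

theorem busInjection_add_angle {e e' : Fin N → ℝ → ℝ} {δ δ' : Fin N → ℝ}
    (h : ∀ k ψ, e' k (ψ + (δ' i - δ' k)) = e k (ψ + (δ i - δ k)))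
    (x : (Fin N → ℝ) × (Fin N → ℝ)) :
    busInjection i e' (x + (δ' - δ, 0)) = busInjection i e x := by
  simp only [busInjection, Prod.fst_add, Prod.snd_add, Pi.add_apply, Pi.sub_apply,
    Pi.zero_apply, add_zero]
  congr 1
  refine Finset.sum_congr rfl fun k _ => ?_
  have hk := h k (x.1 i - x.1 k - (δ i - δ k))
  rw [sub_add_cancel] at hk
  rw [show x.1 i + (δ' i - δ i) - (x.1 k + (δ' k - δ k))
      = x.1 i - x.1 k - (δ i - δ k) + (δ' i - δ' k) by ring, hk]

end BusInjection

section Injections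

variable {N : ℕ} (G B : Fin N → Fin N → ℝ)

theorem pdA_Pinj_of_ne {i j : Fin N} (hij : i ≠ j) (x : (Fin N → ℝ) × (Fin N → ℝ)) :
    pdA N j (Pinj N G B i) x = x.2 i * x.2 j * phasorIm (G i j) (B i j) (x.1 i - x.1 j) :=
  (fderiv_busInjection_of_ne (fun k => hasDerivAt_phasorRe (G i k) (B i k)) hij x).trans
    (by ring)

theorem pdA_Qinj_of_ne {i j : Fin N} (hij : i ≠ j) (x : (Fin N → ℝ) × (Fin N → ℝ)) :
    pdA N j (Qinj N G B i) x = -(x.2 i * x.2 j * phasorRe (G i j) (B i j) (x.1 i - x.1 j)) :=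
  fderiv_busInjection_of_ne (fun k => hasDerivAt_phasorIm (G i k) (B i k)) hij x

variable {G B} {G' B' : Fin N → Fin N → ℝ} {δ δ' V : Fin N → ℝ}

theorem Pinj_add_angle (hRe : ∀ i j, phasorRe (G i j) (B i j) (δ i - δ j) =
      phasorRe (G' i j) (B' i j) (δ' i - δ' j))
    (hIm : ∀ i j, phasorIm (G i j) (B i j) (δ i - δ j) = phasorIm (G' i j) (B' i j) (δ' i - δ' j))
    (i : Fin N) (x : (Fin N → ℝ) × (Fin N → ℝ)) :
    Pinj N G' B' i (x + (δ' - δ, 0)) = Pinj N G B i x :=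
  busInjection_add_angle (fun k => phasorRe_add_eq (hRe i k) (hIm i k)) x

theorem Qinj_add_angle (hRe : ∀ i j, phasorRe (G i j) (B i j) (δ i - δ j) =
      phasorRe (G' i j) (B' i j) (δ' i - δ' j))
    (hIm : ∀ i j, phasorIm (G i j) (B i j) (δ i - δ j) = phasorIm (G' i j) (B' i j) (δ' i - δ' j))
    (i : Fin N) (x : (Fin N → ℝ) × (Fin N → ℝ)) :
    Qinj N G' B' i (x + (δ' - δ, 0)) = Qinj N G B i x :=
  busInjection_add_angle (fun k => phasorIm_add_eq (hRe i k) (hIm i k)) x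

theorem phasorIm_eq_of_ne (hV : ∀ i, V i ≠ 0)
    (hPd : ∀ i j, pdA N j (Pinj N G B i) (δ, V) = pdA N j (Pinj N G' B' i) (δ', V))
    {i j : Fin N} (hij : i ≠ j) :
    phasorIm (G i j) (B i j) (δ i - δ j) = phasorIm (G' i j) (B' i j) (δ' i - δ' j) := by
  have h := hPd i j
  rw [pdA_Pinj_of_ne G B hij, pdA_Pinj_of_ne G' B' hij] at h
  exact mul_left_cancel₀ (mul_ne_zero (hV i) (hV j)) h

theorem phasorRe_eq_of_ne (hV : ∀ i, V i ≠ 0)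
    (hQd : ∀ i j, pdA N j (Qinj N G B i) (δ, V) = pdA N j (Qinj N G' B' i) (δ', V))
    {i j : Fin N} (hij : i ≠ j) :
    phasorRe (G i j) (B i j) (δ i - δ j) = phasorRe (G' i j) (B' i j) (δ' i - δ' j) := by
  have h := hQd i j
  rw [pdA_Qinj_of_ne G B hij, pdA_Qinj_of_ne G' B' hij, neg_inj] at h
  exact mul_left_cancel₀ (mul_ne_zero (hV i) (hV j)) h

theorem phasorRe_eq (hV : ∀ i, V i ≠ 0)
    (hP : ∀ i, Pinj N G B i (δ, V) = Pinj N G' B' i (δ', V))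
    (hQd : ∀ i j, pdA N j (Qinj N G B i) (δ, V) = pdA N j (Qinj N G' B' i) (δ', V))
    (i j : Fin N) :
    phasorRe (G i j) (B i j) (δ i - δ j) = phasorRe (G' i j) (B' i j) (δ' i - δ' j) := by
  rcases eq_or_ne i j with rfl | hij
  · exact eq_of_mul_sum_eq_of_ne (hV i) (hP i) fun k hk => phasorRe_eq_of_ne hV hQd hk.symm
  · exact phasorRe_eq_of_ne hV hQd hij

theorem phasorIm_eq (hV : ∀ i, V i ≠ 0)
    (hQ : ∀ i, Qinj N G B i (δ, V) = Qinj N G' B' i (δ', V))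
    (hPd : ∀ i j, pdA N j (Pinj N G B i) (δ, V) = pdA N j (Pinj N G' B' i) (δ', V))
    (i j : Fin N) :
    phasorIm (G i j) (B i j) (δ i - δ j) = phasorIm (G' i j) (B' i j) (δ' i - δ' j) := by
  rcases eq_or_ne i j with rfl | hij
  · exact eq_of_mul_sum_eq_of_ne (hV i) (hQ i) fun k hk => phasorIm_eq_of_ne hV hPd hk.symm
  · exact phasorIm_eq_of_ne hV hPd hij

end Injections

theorem stmt12_general (N : ℕ) (G B G' B' : Fin N → Fin N → ℝ)
    (δ δ' V : Fin N → ℝ) (hV : ∀ i, V i ≠ 0)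
    (hP : ∀ i, Pinj N G B i (δ, V) = Pinj N G' B' i (δ', V))
    (hQ : ∀ i, Qinj N G B i (δ, V) = Qinj N G' B' i (δ', V))
    (hPd : ∀ i j, pdA N j (Pinj N G B i) (δ, V) = pdA N j (Pinj N G' B' i) (δ', V))
    (hQd : ∀ i j, pdA N j (Qinj N G B i) (δ, V) = pdA N j (Qinj N G' B' i) (δ', V)) :
    ∀ (i : Fin N) (l : List (Fin N ⊕ Fin N)), 1 ≤ l.length →
      iterPD N l (Pinj N G B i) (δ, V) = iterPD N l (Pinj N G' B' i) (δ', V) ∧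
      iterPD N l (Qinj N G B i) (δ, V) = iterPD N l (Qinj N G' B' i) (δ', V) := by
  have hRe := phasorRe_eq hV hP hQd
  have hIm := phasorIm_eq hV hQ hPd
  have hshift : ((δ, V) : (Fin N → ℝ) × (Fin N → ℝ)) + (δ' - δ, 0) = (δ', V) := by simp
  intro i l _
  rw [← funext (Pinj_add_angle hRe hIm i), ← funext (Qinj_add_angle hRe hIm i),
    iterPD_comp_add_right, iterPD_comp_add_right, hshift]
  exact ⟨rfl, rfl⟩

/-- All higher-order partial derivatives of the power flow injections are determined by
the injection values, the voltage magnitudes, and the first-order angle derivatives: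
if two parameter pairs and angle profiles (with the same nonvanishing magnitude profile)
produce the same injections and the same first-order angle derivatives, then all their
iterated partial derivatives of every order `k ≥ 1` coincide. -/
theorem stmt12 (N : ℕ) (hN : 1 ≤ N) (G B G' B' : Fin N → Fin N → ℝ)
    (δ δ' V : Fin N → ℝ) (hV : ∀ i, V i ≠ 0)
    (hP : ∀ i, Pinj N G B i (δ, V) = Pinj N G' B' i (δ', V))
    (hQ : ∀ i, Qinj N G B i (δ, V) = Qinj N G' B' i (δ', V))
    (hPd : ∀ i j, pdA N j (Pinj N G B i) (δ, V) = pdA N j (Pinj N G' B' i) (δ', V))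
    (hQd : ∀ i j, pdA N j (Qinj N G B i) (δ, V) = pdA N j (Qinj N G' B' i) (δ', V)) :
    ∀ (i : Fin N) (l : List (Fin N ⊕ Fin N)), 1 ≤ l.length →
      iterPD N l (Pinj N G B i) (δ, V) = iterPD N l (Pinj N G' B' i) (δ', V) ∧
      iterPD N l (Qinj N G B i) (δ, V) = iterPD N l (Qinj N G' B' i) (δ', V) :=
  stmt12_general N G B G' B' δ δ' V hV hP hQ hPd hQd
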